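/- arXiv:1801.00501 — 5 statements merged into one kernel-verified Lean document; each statement's English description precedes it below -/
import Mathlib

section
/- A poset P is an interval order (i.e., admits an assignment of closed bounded real intervals I(x) = [l(x), r(x)] to its elements such that x < y iff r(x) < l(y)) if and only if P does not contain the poset 2+2 (two disjoint 2-element chains) as an induced subposet. -/
open Finset

/-- Fishburn: a finite poset is an interval order iff it contains no 2+2. -/
theorem interval_order_iff_no_two_plus_two
    (α : Type*) [Fintype α] [PartialOrder α] :
    (∃ l r : α → ℝ, (∀ x, l x ≤ r x) ∧ (∀ x y : α, x < y ↔ r x < l y)) ↔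
    ¬ ∃ a b c d : α, a ≠ b ∧ a ≠ c ∧ a ≠ d ∧ b ≠ c ∧ b ≠ d ∧ c ≠ d ∧
        a < b ∧ c < d ∧
        (¬ a ≤ c ∧ ¬ c ≤ a) ∧ (¬ a ≤ d ∧ ¬ d ≤ a) ∧
        (¬ b ≤ c ∧ ¬ c ≤ b) ∧ (¬ b ≤ d ∧ ¬ d ≤ b) := by
  classical
  constructor
  · rintro ⟨l, r, hlr, hiff⟩ ⟨a, b, c, d, hab, hac, had, hbc, hbd, hcd,
      haltb, hcltd, ⟨hac1, hca1⟩, ⟨had1, hda1⟩, ⟨hbc1, hcb1⟩, ⟨hbd1, hdb1⟩⟩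
    have h1 : r a < l b := (hiff a b).1 haltb
    have h3 : ¬ r c < l b := fun h => hcb1 (le_of_lt ((hiff c b).2 h))
    have h2 : r c < l d := (hiff c d).1 hcltd
    have h4 : r a < l d := lt_of_lt_of_le h1 (le_of_not_gt h3) |>.trans h2
    exact had1 (le_of_lt ((hiff a d).2 h4))
  · intro hno
    set D : α → Finset α := fun x => univ.filter (· < x) with hD
    have hmem : ∀ z x : α, z ∈ D x ↔ z < x := by
      intro z x; simp [hD]
    have hchain : ∀ x y : α, D x ⊆ D y ∨ D y ⊆ D x := by
      intro x y
      by_contra h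
      push_neg at h
      obtain ⟨h1, h2⟩ := h
      rw [Finset.not_subset] at h1 h2
      obtain ⟨cc, hcx, hcy⟩ := h1
      obtain ⟨aa, hay, hax⟩ := h2
      rw [hmem] at hcx hay
      rw [hmem] at hcy hax
      -- cc < x, ¬ cc < y, aa < y, ¬ aa < x
      have hac : ¬ aa ≤ cc := fun h => hax (lt_of_le_of_lt h hcx)
      have hca : ¬ cc ≤ aa := fun h => hcy (lt_of_le_of_lt h hay)
      have hax' : ¬ aa ≤ x := by
        intro h
        rcases lt_or_eq_of_le h with h' | h'
        · exact hax h'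
        · exact hcy (h' ▸ hcx |>.trans hay)
      have hxa : ¬ x ≤ aa := fun h => hcy ((hcx.trans_le h).trans hay)
      have hyc : ¬ y ≤ cc := fun h => hax ((hay.trans_le h).trans hcx)
      have hcy' : ¬ cc ≤ y := by
        intro h
        rcases lt_or_eq_of_le h with h' | h'
        · exact hcy h'
        · exact hax ((h' ▸ hay).trans hcx)
      have hyx : ¬ y ≤ x := fun h => hax (lt_of_lt_of_le hay h)
      have hxy : ¬ x ≤ y := fun h => hcy (lt_of_lt_of_le hcx h)
      exact hno ⟨aa, y, cc, x,
        ne_of_lt hay, fun h => hac (le_of_eq h), fun h => hax' (le_of_eq h),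
        fun h => hyc (le_of_eq h), fun h => hyx (le_of_eq h), ne_of_lt hcx,
        hay, hcx, ⟨hac, hca⟩, ⟨hax', hxa⟩, ⟨hyc, hcy'⟩, ⟨hyx, hxy⟩⟩
    refine ⟨fun x => ((D x).card : ℝ),
      fun x => (((univ.filter (fun z => ¬ x < z)).sup (fun z => (D z).card) : ℕ) : ℝ),
      ?_, ?_⟩
    · intro x
      have hx : x ∈ univ.filter (fun z => ¬ x < z) := by
        simp [lt_irrefl]
      exact Nat.cast_le.2 (Finset.le_sup (f := fun z => (D z).card) hx)
    · intro x y
      rw [Nat.cast_lt]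
      constructor
      · intro hxy
        have hxDy : x ∈ D y := (hmem x y).2 hxy
        rw [Finset.sup_lt_iff (by simpa using Finset.card_pos.2 ⟨x, hxDy⟩)]
        intro z hz
        rw [mem_filter] at hz
        have hxDz : x ∉ D z := fun h => hz.2 ((hmem x z).1 h)
        rcases hchain z y with h | h
        · exact Finset.card_lt_card ⟨h, fun h' => hxDz (h' hxDy)⟩
        · exact absurd (h hxDy) hxDz
      · intro hlt
        by_contra hxy
        have hy : y ∈ univ.filter (fun z => ¬ x < z) := by simp [hxy]
        exact absurd (Finset.le_sup (f := fun z => (D z).card) hy) (not_le.2 hlt)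
end

section
/- A poset P contains no 2+2 subposet if and only if the collection of open down sets {D(x) : x ∈ X} is totally ordered by inclusion, where D(x) = {y : y < x}. -/
/-- A poset has no 2+2 iff its open down sets are totally ordered by inclusion. -/
theorem no_two_plus_two_iff_downsets_chain
    (α : Type*) [PartialOrder α] :
    (¬ ∃ a b c d : α, a < b ∧ c < d ∧
        (¬ a ≤ c ∧ ¬ c ≤ a) ∧ (¬ a ≤ d ∧ ¬ d ≤ a) ∧
        (¬ b ≤ c ∧ ¬ c ≤ b) ∧ (¬ b ≤ d ∧ ¬ d ≤ b)) ↔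
    (∀ x y : α, {z : α | z < x} ⊆ {z : α | z < y} ∨
                {z : α | z < y} ⊆ {z : α | z < x}) := by
  constructor
  · intro h x y
    by_contra hc
    push_neg at hc
    rw [Set.not_subset, Set.not_subset] at hc
    obtain ⟨⟨a, hax, hay⟩, ⟨c, hcy, hcx⟩⟩ := hc
    simp only [Set.mem_setOf_eq] at hax hay hcy hcx
    apply h
    refine ⟨a, x, c, y, hax, hcy, ⟨?_, ?_⟩, ⟨?_, ?_⟩, ⟨?_, ?_⟩, ⟨?_, ?_⟩⟩
    · intro hle; exact hay (lt_of_le_of_lt hle hcy)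
    · intro hle; exact hcx (lt_of_le_of_lt hle hax)
    · intro hle
      rcases lt_or_eq_of_le hle with h' | h'
      · exact hay h'
      · subst h'; exact hcx (hcy.trans hax)
    · intro hle; exact hcx (lt_of_lt_of_le hcy (le_of_lt (lt_of_le_of_lt hle hax)))
    · intro hle; exact hay (lt_of_lt_of_le hax (le_of_lt (lt_of_le_of_lt hle hcy)))
    · intro hle
      rcases lt_or_eq_of_le hle with h' | h'
      · exact hcx h'
      · subst h'; exact hay (hax.trans hcy)
    · intro hle; exact hay (lt_of_lt_of_le hax hle)
    · intro hle; exact hcx (lt_of_lt_of_le hcy hle)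
  · rintro h ⟨a, b, c, d, hab, hcd, ⟨_, _⟩, ⟨had, _⟩, ⟨_, hcb⟩, _⟩
    rcases h b d with hs | hs
    · exact had (le_of_lt (hs hab))
    · exact hcb (le_of_lt (hs hcd))
end

section
/- A poset P contains no 2+2 subposet if and only if the collection of open up sets {U(x) : x ∈ X} is totally ordered by inclusion, where U(x) = {y : y > x}. -/
/-- A poset has no 2+2 iff its open up sets are totally ordered by inclusion. -/
theorem no_two_plus_two_iff_upsets_chain
    (α : Type*) [PartialOrder α] :
    (¬ ∃ a b c d : α, a < b ∧ c < d ∧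
        (¬ a ≤ c ∧ ¬ c ≤ a) ∧ (¬ a ≤ d ∧ ¬ d ≤ a) ∧
        (¬ b ≤ c ∧ ¬ c ≤ b) ∧ (¬ b ≤ d ∧ ¬ d ≤ b)) ↔
    (∀ x y : α, {z : α | x < z} ⊆ {z : α | y < z} ∨
                {z : α | y < z} ⊆ {z : α | x < z}) := by
  constructor
  · intro h x y
    by_contra hc
    push_neg at hc
    obtain ⟨h1, h2⟩ := hc
    rw [Set.not_subset] at h1 h2
    obtain ⟨b, hxb, hyb⟩ := h1
    obtain ⟨d, hyd, hxd⟩ := h2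
    simp only [Set.mem_setOf_eq] at hxb hyb hyd hxd
    apply h
    have hxy : ¬ x ≤ y := fun hle => hxd (lt_of_le_of_lt hle hyd)
    have hyx : ¬ y ≤ x := fun hle => hyb (lt_of_le_of_lt hle hxb)
    refine ⟨x, b, y, d, hxb, hyd, ⟨hxy, hyx⟩, ?_, ?_, ?_⟩
    · refine ⟨fun hle => ?_, fun hle => hyx (hyd.le.trans hle)⟩
      rcases hle.lt_or_eq with h' | h'
      · exact hxd h'
      · exact hyx (h' ▸ hyd.le)
    · refine ⟨fun hle => hxy (hxb.le.trans hle), fun hle => ?_⟩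
      rcases hle.lt_or_eq with h' | h'
      · exact hyb h'
      · exact hxy (h' ▸ hxb.le)
    · exact ⟨fun hle => hxd (lt_of_lt_of_le hxb hle),
        fun hle => hyb (lt_of_lt_of_le hyd hle)⟩
  · rintro h ⟨a, b, c, d, hab, hcd, ⟨hac, hca⟩, ⟨had, hda⟩, ⟨hbc, hcb⟩, ⟨hbd, hdb⟩⟩
    rcases h a c with h1 | h1
    · exact hcb (h1 hab).le
    · exact had (h1 hcd).le
end

section
/- A finite poset P admits a unit interval representation (an assignment of real numbers f(x) such that x < y iff f(x) + 1 < f(y)) if and only if P contains neither 2+2 nor 1+3 as an induced subposet. -/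
namespace ScottSuppesAux


variable {α : Type*} [PartialOrder α]

def Tle (x y : α) : Prop := (∀ z, y < z → x < z) ∧ (∀ z, z < x → z < y)

lemma tle_refl (x : α) : Tle x x := ⟨fun _ h => h, fun _ h => h⟩
lemma tle_trans {x y z : α} (h : Tle x y) (h' : Tle y z) : Tle x z :=
  ⟨fun u hu => h.1 u (h'.1 u hu), fun u hu => h'.2 u (h.2 u hu)⟩
lemma not_tle_of_lt {x y : α} (h : x < y) : ¬ Tle y x :=
  fun h' => lt_irrefl y (h'.1 y h)

lemma exists_tmax (htot : ∀ x y : α, Tle x y ∨ Tle y x) (s : Finset α)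
    (hs : s.Nonempty) : ∃ z ∈ s, ∀ x ∈ s, Tle x z := by
  classical
  induction s using Finset.induction_on with
  | empty => exact absurd hs (by simp)
  | @insert a s ha ih =>
    rcases s.eq_empty_or_nonempty with rfl | hs'
    · exact ⟨a, by simp, by simp [tle_refl]⟩
    · obtain ⟨z, hz, hzmax⟩ := ih hs'
      rcases htot z a with h | h
      · exact ⟨a, Finset.mem_insert_self a s, fun x hx => by
          rcases Finset.mem_insert.mp hx with rfl | hx
          · exact tle_refl x
          · exact tle_trans (hzmax x hx) h⟩
      · exact ⟨z, Finset.mem_insert_of_mem hz, fun x hx => by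
          rcases Finset.mem_insert.mp hx with rfl | hx
          · exact h
          · exact hzmax x hx⟩

lemma exists_rep (htot : ∀ x y : α, Tle x y ∨ Tle y x) (s : Finset α) :
    ∃ f : α → ℝ,
      (∀ x ∈ s, ∀ y ∈ s, (x < y ↔ f x + 1 < f y)) ∧
      (∀ x ∈ s, ∀ y ∈ s, Tle x y → f x ≤ f y) ∧
      (∀ x ∈ s, ∀ y ∈ s, Tle x y → Tle y x → f x = f y) ∧
      (∀ x ∈ s, ∀ y ∈ s, Tle x y → ¬ Tle y x → f x < f y) ∧
      (∀ x ∈ s, ∀ y ∈ s, Tle x y → ¬ Tle y x → ¬ x < y → f y < f x + 1) := by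
  classical
  induction s using Finset.strongInduction with
  | _ s ih =>
  rcases s.eq_empty_or_nonempty with rfl | hs
  · exact ⟨fun _ => 0, by simp, by simp, by simp, by simp, by simp⟩
  obtain ⟨z, hzs, hzmax⟩ := exists_tmax htot s hs
  obtain ⟨f, hiff, hmono, heq, hstrict, hupper⟩ :=
    ih (s.erase z) (Finset.erase_ssubset hzs)
  by_cases hw : ∃ w ∈ s.erase z, Tle z w ∧ Tle w z
  · -- an equivalent element already exists
    obtain ⟨w, hws, hzw, hwz⟩ := hw
    refine ⟨fun t => if t = z then f w else f t, ?_, ?_, ?_, ?_, ?_⟩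
    · intro x hx y hy
      by_cases hxz : x = z <;> by_cases hyz : y = z
      · simp only [if_pos hxz, if_pos hyz]
        rw [hxz, hyz]
        exact ⟨fun h => absurd h (lt_irrefl _),
          fun h => absurd ((lt_add_one (f w)).trans h) (lt_irrefl _)⟩
      · have hy' : y ∈ s.erase z := Finset.mem_erase.mpr ⟨hyz, hy⟩
        simp only [if_pos hxz, if_neg hyz]
        rw [hxz]
        constructor
        · intro h; exact (hiff w hws y hy').mp (hwz.1 y h)
        · intro h; exact hzw.1 y ((hiff w hws y hy').mpr h)
      · have hx' : x ∈ s.erase z := Finset.mem_erase.mpr ⟨hxz, hx⟩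
        simp only [if_neg hxz, if_pos hyz]
        rw [hyz]
        constructor
        · intro h; exact (hiff x hx' w hws).mp (hzw.2 x h)
        · intro h; exact hwz.2 x ((hiff x hx' w hws).mpr h)
      · have hx' : x ∈ s.erase z := Finset.mem_erase.mpr ⟨hxz, hx⟩
        have hy' : y ∈ s.erase z := Finset.mem_erase.mpr ⟨hyz, hy⟩
        simp only [if_neg hxz, if_neg hyz]
        exact hiff x hx' y hy'
    · intro x hx y hy hxy
      by_cases hxz : x = z <;> by_cases hyz : y = z
      · simp only [if_pos hxz, if_pos hyz]; exact le_refl _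
      · have hy' : y ∈ s.erase z := Finset.mem_erase.mpr ⟨hyz, hy⟩
        simp only [if_pos hxz, if_neg hyz]
        rw [hxz] at hxy
        exact hmono w hws y hy' (tle_trans hwz hxy)
      · have hx' : x ∈ s.erase z := Finset.mem_erase.mpr ⟨hxz, hx⟩
        simp only [if_neg hxz, if_pos hyz]
        rw [hyz] at hxy
        exact hmono x hx' w hws (tle_trans hxy hzw)
      · have hx' : x ∈ s.erase z := Finset.mem_erase.mpr ⟨hxz, hx⟩
        have hy' : y ∈ s.erase z := Finset.mem_erase.mpr ⟨hyz, hy⟩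
        simp only [if_neg hxz, if_neg hyz]
        exact hmono x hx' y hy' hxy
    · intro x hx y hy hxy hyx
      by_cases hxz : x = z <;> by_cases hyz : y = z
      · simp only [if_pos hxz, if_pos hyz]
      · have hy' : y ∈ s.erase z := Finset.mem_erase.mpr ⟨hyz, hy⟩
        simp only [if_pos hxz, if_neg hyz]
        rw [hxz] at hxy hyx
        exact heq w hws y hy' (tle_trans hwz hxy) (tle_trans hyx hzw)
      · have hx' : x ∈ s.erase z := Finset.mem_erase.mpr ⟨hxz, hx⟩
        simp only [if_neg hxz, if_pos hyz]
        rw [hyz] at hxy hyx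
        exact heq x hx' w hws (tle_trans hxy hzw) (tle_trans hwz hyx)
      · have hx' : x ∈ s.erase z := Finset.mem_erase.mpr ⟨hxz, hx⟩
        have hy' : y ∈ s.erase z := Finset.mem_erase.mpr ⟨hyz, hy⟩
        simp only [if_neg hxz, if_neg hyz]
        exact heq x hx' y hy' hxy hyx
    · intro x hx y hy hxy hyx
      by_cases hxz : x = z <;> by_cases hyz : y = z
      · rw [hxz, hyz] at hyx
        exact absurd (tle_refl z) hyx
      · have hy' : y ∈ s.erase z := Finset.mem_erase.mpr ⟨hyz, hy⟩
        simp only [if_pos hxz, if_neg hyz]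
        rw [hxz] at hxy hyx
        exact hstrict w hws y hy' (tle_trans hwz hxy)
          (fun h => hyx (tle_trans h hwz))
      · have hx' : x ∈ s.erase z := Finset.mem_erase.mpr ⟨hxz, hx⟩
        simp only [if_neg hxz, if_pos hyz]
        rw [hyz] at hxy hyx
        exact hstrict x hx' w hws (tle_trans hxy hzw)
          (fun h => hyx (tle_trans hzw h))
      · have hx' : x ∈ s.erase z := Finset.mem_erase.mpr ⟨hxz, hx⟩
        have hy' : y ∈ s.erase z := Finset.mem_erase.mpr ⟨hyz, hy⟩
        simp only [if_neg hxz, if_neg hyz]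
        exact hstrict x hx' y hy' hxy hyx
    · intro x hx y hy hxy hyx hnlt
      by_cases hxz : x = z <;> by_cases hyz : y = z
      · rw [hxz, hyz] at hyx
        exact absurd (tle_refl z) hyx
      · have hy' : y ∈ s.erase z := Finset.mem_erase.mpr ⟨hyz, hy⟩
        simp only [if_pos hxz, if_neg hyz]
        rw [hxz] at hxy hyx hnlt
        exact hupper w hws y hy' (tle_trans hwz hxy)
          (fun h => hyx (tle_trans h hwz)) (fun h => hnlt (hzw.1 y h))
      · have hx' : x ∈ s.erase z := Finset.mem_erase.mpr ⟨hxz, hx⟩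
        simp only [if_neg hxz, if_pos hyz]
        rw [hyz] at hxy hyx hnlt
        exact hupper x hx' w hws (tle_trans hxy hzw)
          (fun h => hyx (tle_trans hzw h)) (fun h => hnlt (hwz.2 x h))
      · have hx' : x ∈ s.erase z := Finset.mem_erase.mpr ⟨hxz, hx⟩
        have hy' : y ∈ s.erase z := Finset.mem_erase.mpr ⟨hyz, hy⟩
        simp only [if_neg hxz, if_neg hyz]
        exact hupper x hx' y hy' hxy hyx hnlt
  · -- z is strictly above everything else in the trace
    have hall : ∀ x ∈ s.erase z, Tle x z ∧ ¬ Tle z x := by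
      intro x hx
      refine ⟨hzmax x (Finset.mem_of_mem_erase hx), fun hzx => hw ⟨x, hx, hzx,
        hzmax x (Finset.mem_of_mem_erase hx)⟩⟩
    rcases (s.erase z).eq_empty_or_nonempty with h0 | hne
    · -- s = {z}
      have hsingle : ∀ x ∈ s, x = z := by
        intro x hx
        by_contra hxz
        have : x ∈ s.erase z := Finset.mem_erase.mpr ⟨hxz, hx⟩
        simp [h0] at this
      refine ⟨fun _ => (0 : ℝ), ?_, ?_, ?_, ?_, ?_⟩
      · intro x hx y hy
        rw [hsingle x hx, hsingle y hy]
        exact ⟨fun h => absurd h (lt_irrefl _), fun h => absurd h (by norm_num)⟩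
      · intro x _ y _ _; exact le_refl _
      · intro x _ y _ _ _; rfl
      · intro x hx y hy h1 h2
        rw [hsingle x hx, hsingle y hy] at h1 h2
        exact absurd h1 h2
      · intro x hx y hy h1 h2 _
        rw [hsingle x hx, hsingle y hy] at h1 h2
        exact absurd h1 h2
    · -- construct the new value v
      obtain ⟨v, hv1, hv2, hv3⟩ : ∃ v : ℝ,
          (∀ x ∈ s.erase z, x < z → f x + 1 < v) ∧
          (∀ x ∈ s.erase z, f x < v) ∧
          (∀ y ∈ s.erase z, ¬ y < z → v < f y + 1) := by
        set lo := (s.erase z).sup' hne (fun x => if x < z then f x + 1 else f x)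
          with hlo
        have hlolb1 : ∀ x ∈ s.erase z, x < z → f x + 1 ≤ lo := by
          intro x hx hxlt
          have := Finset.le_sup' (fun x => if x < z then f x + 1 else f x) hx
          rwa [if_pos hxlt] at this
        have hlolb2 : ∀ x ∈ s.erase z, f x ≤ lo := by
          intro x hx
          have := Finset.le_sup' (fun x => if x < z then f x + 1 else f x) hx
          by_cases hxlt : x < z
          · rw [if_pos hxlt] at this; linarith only [this]
          · rwa [if_neg hxlt] at this
        by_cases hC : ∃ y ∈ s.erase z, ¬ y < z
        · set C := (s.erase z).filter (fun y => ¬ y < z) with hCdef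
          have hCne : C.Nonempty := by
            obtain ⟨y, hy, hy'⟩ := hC
            exact ⟨y, Finset.mem_filter.mpr ⟨hy, hy'⟩⟩
          set hi := C.inf' hCne (fun y => f y + 1) with hhi
          have key : ∀ x ∈ s.erase z, ∀ y ∈ s.erase z, ¬ y < z →
              (if x < z then f x + 1 else f x) < f y + 1 := by
            intro x hx y hy hyz
            by_cases hxlt : x < z
            · rw [if_pos hxlt]
              have hnyx : ¬ Tle y x := fun h => hyz (h.1 z hxlt)
              have hxy : Tle x y := (htot x y).resolve_right hnyx
              have := hstrict x hx y hy hxy hnyx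
              linarith only [this]
            · rw [if_neg hxlt]
              rcases htot x y with h | h
              · have := hmono x hx y hy h
                linarith only [this]
              · by_cases hxy : Tle x y
                · have := heq x hx y hy hxy h
                  linarith only [this]
                · have hnyx : ¬ y < x := fun hlt =>
                    hyz ((hall x hx).1.2 y hlt)
                  exact hupper y hy x hx h hxy hnyx
          have hlohi : lo < hi := by
            rw [hlo, hhi]
            rw [Finset.sup'_lt_iff]
            intro x hx
            rw [Finset.lt_inf'_iff]
            intro y hy
            have hy' := Finset.mem_filter.mp hy
            exact key x hx y hy'.1 hy'.2
          refine ⟨(lo + hi) / 2, ?_, ?_, ?_⟩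
          · intro x hx hxlt
            have := hlolb1 x hx hxlt
            linarith only [this, hlohi]
          · intro x hx
            have := hlolb2 x hx
            linarith only [this, hlohi]
          · intro y hy hyz
            have : hi ≤ f y + 1 :=
              Finset.inf'_le _ (Finset.mem_filter.mpr ⟨hy, hyz⟩)
            linarith only [this, hlohi]
        · push_neg at hC
          refine ⟨lo + 1, ?_, ?_, ?_⟩
          · intro x hx hxlt
            have := hlolb1 x hx hxlt
            linarith only [this]
          · intro x hx
            have := hlolb2 x hx
            linarith only [this]
          · intro y hy hyz
            exact absurd (hC y hy) hyz
      -- now build the function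
      refine ⟨fun t => if t = z then v else f t, ?_, ?_, ?_, ?_, ?_⟩
      · intro x hx y hy
        by_cases hxz : x = z <;> by_cases hyz : y = z
        · simp only [if_pos hxz, if_pos hyz]
          rw [hxz, hyz]
          exact ⟨fun h => absurd h (lt_irrefl _),
            fun h => absurd ((lt_add_one v).trans h) (lt_irrefl _)⟩
        · have hy' : y ∈ s.erase z := Finset.mem_erase.mpr ⟨hyz, hy⟩
          simp only [if_pos hxz, if_neg hyz]
          rw [hxz]
          constructor
          · intro h; exact absurd (hall y hy').1 (not_tle_of_lt h)
          · intro h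
            have := hv2 y hy'
            exact absurd (this.trans ((lt_add_one v).trans h)) (lt_irrefl _)
        · have hx' : x ∈ s.erase z := Finset.mem_erase.mpr ⟨hxz, hx⟩
          simp only [if_neg hxz, if_pos hyz]
          rw [hyz]
          constructor
          · intro h; exact hv1 x hx' h
          · intro h
            by_contra hnx
            have := hv3 x hx' hnx
            linarith only [this, h]
        · have hx' : x ∈ s.erase z := Finset.mem_erase.mpr ⟨hxz, hx⟩
          have hy' : y ∈ s.erase z := Finset.mem_erase.mpr ⟨hyz, hy⟩
          simp only [if_neg hxz, if_neg hyz]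
          exact hiff x hx' y hy'
      · intro x hx y hy hxy
        by_cases hxz : x = z <;> by_cases hyz : y = z
        · simp only [if_pos hxz, if_pos hyz]; exact le_refl _
        · have hy' : y ∈ s.erase z := Finset.mem_erase.mpr ⟨hyz, hy⟩
          rw [hxz] at hxy
          exact absurd hxy (hall y hy').2
        · have hx' : x ∈ s.erase z := Finset.mem_erase.mpr ⟨hxz, hx⟩
          simp only [if_neg hxz, if_pos hyz]
          exact (hv2 x hx').le
        · have hx' : x ∈ s.erase z := Finset.mem_erase.mpr ⟨hxz, hx⟩
          have hy' : y ∈ s.erase z := Finset.mem_erase.mpr ⟨hyz, hy⟩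
          simp only [if_neg hxz, if_neg hyz]
          exact hmono x hx' y hy' hxy
      · intro x hx y hy hxy hyx
        by_cases hxz : x = z <;> by_cases hyz : y = z
        · simp only [if_pos hxz, if_pos hyz]
        · have hy' : y ∈ s.erase z := Finset.mem_erase.mpr ⟨hyz, hy⟩
          rw [hxz] at hxy
          exact absurd hxy (hall y hy').2
        · have hx' : x ∈ s.erase z := Finset.mem_erase.mpr ⟨hxz, hx⟩
          rw [hyz] at hyx
          exact absurd hyx (hall x hx').2
        · have hx' : x ∈ s.erase z := Finset.mem_erase.mpr ⟨hxz, hx⟩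
          have hy' : y ∈ s.erase z := Finset.mem_erase.mpr ⟨hyz, hy⟩
          simp only [if_neg hxz, if_neg hyz]
          exact heq x hx' y hy' hxy hyx
      · intro x hx y hy hxy hyx
        by_cases hxz : x = z <;> by_cases hyz : y = z
        · rw [hxz, hyz] at hyx
          exact absurd (tle_refl z) hyx
        · have hy' : y ∈ s.erase z := Finset.mem_erase.mpr ⟨hyz, hy⟩
          rw [hxz] at hxy
          exact absurd hxy (hall y hy').2
        · have hx' : x ∈ s.erase z := Finset.mem_erase.mpr ⟨hxz, hx⟩
          simp only [if_neg hxz, if_pos hyz]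
          exact hv2 x hx'
        · have hx' : x ∈ s.erase z := Finset.mem_erase.mpr ⟨hxz, hx⟩
          have hy' : y ∈ s.erase z := Finset.mem_erase.mpr ⟨hyz, hy⟩
          simp only [if_neg hxz, if_neg hyz]
          exact hstrict x hx' y hy' hxy hyx
      · intro x hx y hy hxy hyx hnlt
        by_cases hxz : x = z <;> by_cases hyz : y = z
        · rw [hxz, hyz] at hyx
          exact absurd (tle_refl z) hyx
        · have hy' : y ∈ s.erase z := Finset.mem_erase.mpr ⟨hyz, hy⟩
          rw [hxz] at hxy
          exact absurd hxy (hall y hy').2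
        · have hx' : x ∈ s.erase z := Finset.mem_erase.mpr ⟨hxz, hx⟩
          simp only [if_neg hxz, if_pos hyz]
          rw [hyz] at hnlt
          exact hv3 x hx' hnlt
        · have hx' : x ∈ s.erase z := Finset.mem_erase.mpr ⟨hxz, hx⟩
          have hy' : y ∈ s.erase z := Finset.mem_erase.mpr ⟨hyz, hy⟩
          simp only [if_neg hxz, if_neg hyz]
          exact hupper x hx' y hy' hxy hyx hnlt


lemma tle_total
    (h22 : ¬ ∃ a b c d : α, a < b ∧ c < d ∧
        (¬ a ≤ c ∧ ¬ c ≤ a) ∧ (¬ a ≤ d ∧ ¬ d ≤ a) ∧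
        (¬ b ≤ c ∧ ¬ c ≤ b) ∧ (¬ b ≤ d ∧ ¬ d ≤ b))
    (h13 : ¬ ∃ x y z w : α, y < z ∧ z < w ∧
        (¬ x ≤ y ∧ ¬ y ≤ x) ∧ (¬ x ≤ z ∧ ¬ z ≤ x) ∧ (¬ x ≤ w ∧ ¬ w ≤ x))
    (x y : α) : Tle x y ∨ Tle y x := by
  by_contra hc
  push_neg at hc
  obtain ⟨hxy, hyx⟩ := hc
  rw [Tle, not_and_or] at hxy hyx
  push_neg at hxy hyx
  -- hxy : (∃ u, y < u ∧ ¬ x < u) ∨ (∃ w, w < x ∧ ¬ w < y)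
  rcases hxy with ⟨u, hyu, hxu⟩ | ⟨w, hwx, hwy⟩
  · rcases hyx with ⟨v, hxv, hyv⟩ | ⟨t, hty, htx⟩
    · -- 2+2 : x < v, y < u, all cross incomparable
      refine h22 ⟨x, v, y, u, hxv, hyu, ?_, ?_, ?_, ?_⟩
      · constructor
        · intro h; exact hxu (lt_of_le_of_lt h hyu)
        · intro h; exact hyv (lt_of_le_of_lt h hxv)
      · constructor
        · intro h
          rcases lt_or_eq_of_le h with h' | h'
          · exact hxu h'
          · subst h'; exact hyv (hyu.trans hxv)
        · intro h; exact hyv ((hyu.trans_le h).trans hxv)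
      · constructor
        · intro h; exact hxu ((hxv.trans_le h).trans hyu)
        · intro h
          rcases lt_or_eq_of_le h with h' | h'
          · exact hyv h'
          · subst h'; exact hxu (hxv.trans hyu)
      · constructor
        · intro h; exact hxu (hxv.trans_le h)
        · intro h; exact hyv (hyu.trans_le h)
    · -- 1+3 : chain t < y < u, x incomparable to t, y, u
      refine h13 ⟨x, t, y, u, hty, hyu, ?_, ?_, ?_⟩
      · constructor
        · intro h; exact hxu ((lt_of_le_of_lt h hty).trans hyu)
        · intro h
          rcases lt_or_eq_of_le h with h' | h'
          · exact htx h'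
          · subst h'; exact hxu (hty.trans hyu)
      · constructor
        · intro h; exact hxu (lt_of_le_of_lt h hyu)
        · intro h; exact htx (hty.trans_le h)
      · constructor
        · intro h
          rcases lt_or_eq_of_le h with h' | h'
          · exact hxu h'
          · subst h'; exact htx (hty.trans hyu)
        · intro h; exact htx (hty.trans (hyu.trans_le h))
  · rcases hyx with ⟨v, hxv, hyv⟩ | ⟨t, hty, htx⟩
    · -- 1+3 : chain w < x < v, y incomparable to w, x, v
      refine h13 ⟨y, w, x, v, hwx, hxv, ?_, ?_, ?_⟩
      · constructor
        · intro h; exact hyv ((lt_of_le_of_lt h hwx).trans hxv)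
        · intro h
          rcases lt_or_eq_of_le h with h' | h'
          · exact hwy h'
          · subst h'; exact hyv (hwx.trans hxv)
      · constructor
        · intro h; exact hyv (lt_of_le_of_lt h hxv)
        · intro h; exact hwy (hwx.trans_le h)
      · constructor
        · intro h
          rcases lt_or_eq_of_le h with h' | h'
          · exact hyv h'
          · subst h'; exact hwy (hwx.trans hxv)
        · intro h; exact hwy (hwx.trans (hxv.trans_le h))
    · -- 2+2 : w < x, t < y, all cross incomparable
      refine h22 ⟨w, x, t, y, hwx, hty, ?_, ?_, ?_, ?_⟩
      · constructor
        · intro h; exact hwy (lt_of_le_of_lt h hty)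
        · intro h; exact htx (lt_of_le_of_lt h hwx)
      · constructor
        · intro h
          rcases lt_or_eq_of_le h with h' | h'
          · exact hwy h'
          · subst h'; exact htx (hty.trans hwx)
        · intro h; exact htx (hty.trans (lt_of_le_of_lt h hwx))
      · constructor
        · intro h; exact hwy (hwx.trans (lt_of_le_of_lt h hty))
        · intro h
          rcases lt_or_eq_of_le h with h' | h'
          · exact htx h'
          · subst h'; exact hwy (hwx.trans hty)
      · constructor
        · intro h; exact hwy (hwx.trans_le h)
        · intro h; exact htx (hty.trans_le h)


end ScottSuppesAux

/-- Scott–Suppes: a finite poset has a unit interval representation iff it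
contains neither 2+2 nor 1+3. -/
theorem semiorder_iff_unit_interval_representation
    (α : Type*) [Fintype α] [PartialOrder α] :
    (∃ f : α → ℝ, ∀ x y : α, x < y ↔ f x + 1 < f y) ↔
    ((¬ ∃ a b c d : α, a < b ∧ c < d ∧
        (¬ a ≤ c ∧ ¬ c ≤ a) ∧ (¬ a ≤ d ∧ ¬ d ≤ a) ∧
        (¬ b ≤ c ∧ ¬ c ≤ b) ∧ (¬ b ≤ d ∧ ¬ d ≤ b)) ∧
     (¬ ∃ x y z w : α, y < z ∧ z < w ∧
        (¬ x ≤ y ∧ ¬ y ≤ x) ∧ (¬ x ≤ z ∧ ¬ z ≤ x) ∧ (¬ x ≤ w ∧ ¬ w ≤ x))) := by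
  constructor
  · rintro ⟨f, hf⟩
    constructor
    · rintro ⟨a, b, c, d, hab, hcd, ⟨hac, hca⟩, ⟨had, hda⟩, ⟨hbc, hcb⟩, ⟨hbd, hdb⟩⟩
      have fab := (hf a b).mp hab
      have fcd := (hf c d).mp hcd
      have h2 : f b ≤ f c + 1 := not_lt.mp fun h => hcb ((hf c b).mpr h).le
      have h4 : f d ≤ f a + 1 := not_lt.mp fun h => had ((hf a d).mpr h).le
      linarith only [fab, fcd, h2, h4]
    · rintro ⟨x, y, z, w, hyz, hzw, ⟨hxy, hyx⟩, ⟨hxz, hzx⟩, ⟨hxw, hwx⟩⟩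
      have f1 := (hf y z).mp hyz
      have f2 := (hf z w).mp hzw
      have h2 : f w ≤ f x + 1 := not_lt.mp fun h => hxw ((hf x w).mpr h).le
      have h3 : f x ≤ f y + 1 := not_lt.mp fun h => hyx ((hf y x).mpr h).le
      linarith only [f1, f2, h2, h3]
  · rintro ⟨h22, h13⟩
    obtain ⟨f, hiff, -, -, -, -⟩ :=
      ScottSuppesAux.exists_rep (ScottSuppesAux.tle_total h22 h13) Finset.univ
    exact ⟨f, fun x y => hiff x (Finset.mem_univ x) y (Finset.mem_univ y)⟩
end

section
/- Let P be a poset with an interval representation I such that for every element u there exist elements y and w with r(y) = l(u) and l(w) = r(u) (every interval's endpoints are shared: each left endpoint is some right endpoint and vice versa, as in a minimal endpoint representation). If the representation contains two intervals I(x) = [a₁,b₁] and I(z) = [a₂,b₂] with a₁ < a₂ and b₂ < b₁, then P contains a 1+3 subposet. -/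
/-- In a representation where every left endpoint is a right endpoint and vice
versa, a nested pair of intervals forces a 1+3 subposet. -/
theorem nested_intervals_imply_one_plus_three
    (α : Type*) [PartialOrder α] (l r : α → ℝ)
    (hlr : ∀ x, l x ≤ r x) (hrep : ∀ x y : α, x < y ↔ r x < l y)
    (hminL : ∀ u : α, ∃ y : α, r y = l u)
    (hminR : ∀ u : α, ∃ w : α, l w = r u)
    (x z : α) (h1 : l x < l z) (h2 : r z < r x) :
    ∃ p q s t : α, q < s ∧ s < t ∧
      (¬ p ≤ q ∧ ¬ q ≤ p) ∧ (¬ p ≤ s ∧ ¬ s ≤ p) ∧ (¬ p ≤ t ∧ ¬ t ≤ p) := by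
  obtain ⟨q, hq⟩ := hminL x
  obtain ⟨t, ht⟩ := hminR x
  refine ⟨x, q, z, t, ?_, ?_, ⟨?_, ?_⟩, ⟨?_, ?_⟩, ⟨?_, ?_⟩⟩
  · exact (hrep q z).mpr (by linarith)
  · exact (hrep z t).mpr (by linarith)
  · intro h
    rcases lt_or_eq_of_le h with h | h
    · have := (hrep x q).mp h
      linarith [hlr q, hlr x]
    · subst h; linarith [hlr z]
  · intro h
    rcases lt_or_eq_of_le h with h | h
    · have := (hrep q x).mp h
      linarith
    · subst h; linarith [hlr z]
  · intro h
    rcases lt_or_eq_of_le h with h | h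
    · have := (hrep x z).mp h
      linarith [hlr z]
    · rw [h] at h1; linarith
  · intro h
    rcases lt_or_eq_of_le h with h | h
    · have := (hrep z x).mp h
      linarith [hlr z]
    · rw [h] at h1; linarith
  · intro h
    rcases lt_or_eq_of_le h with h | h
    · have := (hrep x t).mp h
      linarith
    · subst h; linarith [hlr z]
  · intro h
    rcases lt_or_eq_of_le h with h | h
    · have := (hrep t x).mp h
      linarith [hlr x, hlr t]
    · subst h; linarith [hlr z]
end
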